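/- Let F(w,v) = log Ψ(w) − log Ψ(v) where Ψ is the standard normal CDF. Then for all w > v and all M ≥ 1: if v ≤ −M then F(w,v) ≤ 2v² + 1/M², and if v ≥ −M then F(w,v) ≤ (w−v)/∫_{−∞}^{−M} e^{−t²/2} dt. -/

import Mathlib

/-!
If `v ≤ -M ≤ -1`, then `log Ψ(w) ≤ 0`, while the Gaussian mass of `[v - 1, v]` gives
`Ψ(v) ≥ exp (-(v - 1)² / 2) / √(2π)`; since `log √(2π) ≤ 1` this bounds `F(w, v)` by
`(v - 1)² / 2 + 1 ≤ 2v² + 1/v² ≤ 2v² + 1/M²`.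
If `v ≥ -M`, combine `log y - log x ≤ (y - x) / x` with the bound `1/√(2π)` on the density
of `Ψ` and with `Ψ(v) ≥ Ψ(-M)`; the factors `√(2π)` cancel.
-/

open Real MeasureTheory

/-- The standard normal cumulative distribution function. -/
noncomputable def stdNormalCDF (v : ℝ) : ℝ :=
  (Real.sqrt (2 * Real.pi))⁻¹ * ∫ t in Set.Iic v, Real.exp (-t ^ 2 / 2)

lemma Real.log_sub_log_le_sub_div {x y : ℝ} (hx : 0 < x) (hy : 0 < y) :
    log y - log x ≤ (y - x) / x := by
  rw [← log_div hy.ne' hx.ne', sub_div, div_self hx.ne']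
  exact log_le_sub_one_of_pos (div_pos hy hx)

lemma log_sqrt_two_mul_pi_le_one : log (√(2 * π)) ≤ 1 := by
  have hsqrt : √(2 * π) ≤ 2.51 := by
    rw [sqrt_le_left (by norm_num)]
    linarith [pi_lt_d2]
  rw [log_le_iff_le_exp (by positivity)]
  linarith [exp_one_gt_d9]

lemma half_sq_sub_one_add_one_le {v : ℝ} (hv : v ≤ -1) :
    (v - 1) ^ 2 / 2 + 1 ≤ 2 * v ^ 2 + 1 / v ^ 2 := by
  have hv0 : v ≠ 0 := by linarith
  rw [← sub_nonneg]
  -- after multiplying by `2 v²` the difference is `(v + 1)² (3 v² - 4 v + 2)`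
  have key : 2 * v ^ 2 * (2 * v ^ 2 + 1 / v ^ 2 - ((v - 1) ^ 2 / 2 + 1))
      = (v + 1) ^ 2 * (3 * v ^ 2 - 4 * v + 2) := by
    field_simp
    ring_nf
  have : 0 ≤ (v + 1) ^ 2 * (3 * v ^ 2 - 4 * v + 2) := by
    apply mul_nonneg (sq_nonneg _)
    nlinarith
  rw [← key] at this
  exact nonneg_of_mul_nonneg_right this (by positivity)

lemma integrable_exp_neg_sq_div_two : Integrable (fun t : ℝ => exp (-t ^ 2 / 2)) := by
  convert integrable_exp_neg_mul_sq (by norm_num : (0 : ℝ) < 1 / 2) using 2 with t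
  ring_nf

lemma integral_exp_neg_sq_div_two : ∫ t : ℝ, exp (-t ^ 2 / 2) = √(2 * π) := by
  convert integral_gaussian (1 / 2) using 2 <;> ring_nf

lemma setIntegral_Iic_exp_neg_sq_div_two_pos (v : ℝ) :
    0 < ∫ t in Set.Iic v, exp (-t ^ 2 / 2) := by
  rw [setIntegral_pos_iff_support_of_nonneg_ae (ae_of_all _ fun _ => (exp_pos _).le)
    integrable_exp_neg_sq_div_two.integrableOn]
  have : Function.support (fun t : ℝ => exp (-t ^ 2 / 2)) = Set.univ :=
    Function.support_eq_univ fun _ => (exp_pos _).ne'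
  simp [this]

lemma setIntegral_Iic_exp_neg_sq_div_two_mono {v w : ℝ} (h : v ≤ w) :
    ∫ t in Set.Iic v, exp (-t ^ 2 / 2) ≤ ∫ t in Set.Iic w, exp (-t ^ 2 / 2) :=
  setIntegral_mono_set integrable_exp_neg_sq_div_two.integrableOn
    (ae_of_all _ fun _ => (exp_pos _).le) (Set.Iic_subset_Iic.2 h).eventuallyLE

lemma setIntegral_Iic_exp_neg_sq_div_two_sub_le {v w : ℝ} (h : v ≤ w) :
    (∫ t in Set.Iic w, exp (-t ^ 2 / 2)) - ∫ t in Set.Iic v, exp (-t ^ 2 / 2) ≤ w - v := by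
  rw [intervalIntegral.integral_Iic_sub_Iic integrable_exp_neg_sq_div_two.integrableOn
    integrable_exp_neg_sq_div_two.integrableOn]
  calc ∫ t in v..w, exp (-t ^ 2 / 2) ≤ ∫ _ in v..w, (1 : ℝ) :=
        intervalIntegral.integral_mono_on h integrable_exp_neg_sq_div_two.intervalIntegrable
          intervalIntegrable_const fun t _ => exp_le_one_iff.2 (by nlinarith)
    _ = w - v := by simp

lemma exp_neg_sq_sub_one_div_two_le_setIntegral_Iic {v : ℝ} (hv : v ≤ 0) :
    exp (-(v - 1) ^ 2 / 2) ≤ ∫ t in Set.Iic v, exp (-t ^ 2 / 2) := by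
  have hvol : volume.real (Set.Icc (v - 1) v) = 1 := by simp [Real.volume_real_Icc]
  calc exp (-(v - 1) ^ 2 / 2)
      = exp (-(v - 1) ^ 2 / 2) * volume.real (Set.Icc (v - 1) v) := by rw [hvol, mul_one]
    _ ≤ ∫ t in Set.Icc (v - 1) v, exp (-t ^ 2 / 2) :=
        setIntegral_ge_of_const_le_real measurableSet_Icc (by simp)
          (fun t ht => exp_le_exp.2 (by nlinarith [ht.1, ht.2]))
          integrable_exp_neg_sq_div_two.integrableOn
    _ ≤ ∫ t in Set.Iic v, exp (-t ^ 2 / 2) :=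
        setIntegral_mono_set integrable_exp_neg_sq_div_two.integrableOn
          (ae_of_all _ fun _ => (exp_pos _).le)
          (Set.Icc_subset_Iic_self : Set.Icc (v - 1) v ⊆ _).eventuallyLE

lemma stdNormalCDF_eq (v : ℝ) :
    stdNormalCDF v = (∫ t in Set.Iic v, exp (-t ^ 2 / 2)) / √(2 * π) :=
  inv_mul_eq_div _ _

lemma stdNormalCDF_pos (v : ℝ) : 0 < stdNormalCDF v := by
  rw [stdNormalCDF_eq]
  exact div_pos (setIntegral_Iic_exp_neg_sq_div_two_pos v) (by positivity)

lemma stdNormalCDF_le_one (v : ℝ) : stdNormalCDF v ≤ 1 := by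
  rw [stdNormalCDF_eq, div_le_one (by positivity), ← integral_exp_neg_sq_div_two]
  exact setIntegral_le_integral integrable_exp_neg_sq_div_two
    (ae_of_all _ fun _ => (exp_pos _).le)

lemma stdNormalCDF_mono : Monotone stdNormalCDF := fun v w h => by
  rw [stdNormalCDF_eq, stdNormalCDF_eq]
  exact div_le_div_of_nonneg_right (setIntegral_Iic_exp_neg_sq_div_two_mono h) (by positivity)

lemma stdNormalCDF_sub_le {v w : ℝ} (h : v ≤ w) :
    stdNormalCDF w - stdNormalCDF v ≤ (w - v) / √(2 * π) := by
  rw [stdNormalCDF_eq, stdNormalCDF_eq, ← sub_div]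
  exact div_le_div_of_nonneg_right (setIntegral_Iic_exp_neg_sq_div_two_sub_le h) (by positivity)

lemma neg_log_stdNormalCDF_le {v : ℝ} (hv : v ≤ 0) :
    -log (stdNormalCDF v) ≤ (v - 1) ^ 2 / 2 + 1 := by
  have hI := setIntegral_Iic_exp_neg_sq_div_two_pos v
  have hlog : -((v - 1) ^ 2 / 2) ≤ log (∫ t in Set.Iic v, exp (-t ^ 2 / 2)) := by
    rw [le_log_iff_exp_le hI, ← neg_div]
    exact exp_neg_sq_sub_one_div_two_le_setIntegral_Iic hv
  rw [stdNormalCDF_eq, log_div hI.ne' (by positivity)]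
  linarith [log_sqrt_two_mul_pi_le_one]

/-- Bounds on `F(w,v) = log Ψ(w) − log Ψ(v)` for `w > v`, `M ≥ 1`. -/
theorem logPsi_difference_bound (w v M : ℝ) (hwv : w > v) (hM : 1 ≤ M) :
    (v ≤ -M →
      Real.log (stdNormalCDF w) - Real.log (stdNormalCDF v) ≤ 2 * v ^ 2 + 1 / M ^ 2) ∧
    (v ≥ -M →
      Real.log (stdNormalCDF w) - Real.log (stdNormalCDF v)
        ≤ (w - v) / ∫ t in Set.Iic (-M), Real.exp (-t ^ 2 / 2)) := by
  refine ⟨fun hv => ?_, fun hv => ?_⟩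
  · have hv1 : v ≤ -1 := by linarith
    have hMv : 1 / v ^ 2 ≤ 1 / M ^ 2 := one_div_le_one_div_of_le (by positivity) (by nlinarith)
    have hw : log (stdNormalCDF w) ≤ 0 :=
      log_nonpos (stdNormalCDF_pos w).le (stdNormalCDF_le_one w)
    linarith [neg_log_stdNormalCDF_le (v := v) (by linarith), half_sq_sub_one_add_one_le hv1]
  · calc log (stdNormalCDF w) - log (stdNormalCDF v)
        ≤ (stdNormalCDF w - stdNormalCDF v) / stdNormalCDF v :=
          log_sub_log_le_sub_div (stdNormalCDF_pos v) (stdNormalCDF_pos w)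
      _ ≤ ((w - v) / √(2 * π)) / stdNormalCDF (-M) :=
          div_le_div₀ (div_nonneg (sub_nonneg.2 hwv.le) (by positivity))
            (stdNormalCDF_sub_le hwv.le) (stdNormalCDF_pos _) (stdNormalCDF_mono hv)
      _ = (w - v) / ∫ t in Set.Iic (-M), exp (-t ^ 2 / 2) := by
          rw [stdNormalCDF_eq, div_div_div_cancel_right₀ (by positivity)]
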